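/- (ELT Cauchy–Schwarz inequality) Let 𝓡 = 𝓡(ℝ,ℂ) and let ⟨·,·⟩ be an ELT inner product on 𝓡̄ⁿ. Then for all u, v ∈ 𝓡̄ⁿ: t(⟨u,v⟩²) ≤ t(⟨u,u⟩·⟨v,v⟩), i.e. 2·t(⟨u,v⟩) ≤ t(⟨u,u⟩) + t(⟨v,v⟩) in ℝ ∪ {−∞}. -/

import Mathlib

/-- The ELT algebra `𝓡(F, L)` together with an adjoined `−∞` element:
`bot` represents `−∞`, and `elt a ℓ` represents the element `[ℓ]a`
with tangible value `a ∈ F` and layer `ℓ ∈ L`.  Thus `ELT F L` plays the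
role of `𝓡̄ = 𝓡 ∪ {−∞}`. -/
inductive ELT (F : Type) (L : Type) : Type
  | bot : ELT F L
  | elt : F → L → ELT F L

namespace ELT

variable {F : Type} {L : Type}

/-- The sorting map `s : 𝓡̄ → L`, with `s (−∞) = 0`. -/
def s [Zero L] : ELT F L → L
  | bot => 0
  | elt _ ℓ => ℓ

/-- The tangible value `t : 𝓡̄ → F ∪ {−∞}`, with `t (−∞) = −∞ = ⊥`. -/
def t : ELT F L → WithBot F
  | bot => ⊥
  | elt a _ => (a : WithBot F)

/-- `−∞` is the additive identity of `𝓡̄`, so we register it as the zero. -/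
instance : Zero (ELT F L) := ⟨bot⟩

/-- The multiplicative identity `[1]0`. -/
instance [Zero F] [One L] : One (ELT F L) := ⟨elt 0 1⟩

/-- Addition on `𝓡̄`: the element with larger tangible value wins, and layers
add in case of a tie; `−∞` is neutral. -/
instance [LinearOrder F] [Add L] : Add (ELT F L) where
  add x y :=
    match x, y with
    | bot, y => y
    | x, bot => x
    | elt a ℓ, elt b k => if a < b then elt b k else if b < a then elt a ℓ else elt a (ℓ + k)

/-- Multiplication on `𝓡̄`: tangible values add, layers multiply; `−∞` is absorbing. -/
instance [Add F] [Mul L] : Mul (ELT F L) where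
  mul x y :=
    match x, y with
    | bot, _ => bot
    | _, bot => bot
    | elt a ℓ, elt b k => elt (a + b) (ℓ * k)

/-- The surpassing relation `x ⊨ y` on `𝓡̄`: `x = y + z` for some zero-layered `z`. -/
def Surpass [LinearOrder F] [Add L] [Zero L] (x y : ELT F L) : Prop :=
  ∃ z : ELT F L, s z = 0 ∧ x = y + z

/-- `x ∈ 𝓡^× ∪ {−∞}`: either `x = −∞` or `x` has nonzero layer. -/
def TangibleOrBot [Zero L] (x : ELT F L) : Prop :=
  x = bot ∨ s x ≠ 0

/-- The sum of a finite family of elements of `𝓡̄`. -/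
def fsum [LinearOrder F] [Add L] {m : ℕ} (f : Fin m → ELT F L) : ELT F L :=
  (List.ofFn f).sum

/-- A finite family of vectors in `𝓡̄ⁿ` is linearly dependent if there are
coefficients in `𝓡^× ∪ {−∞}`, not all `−∞`, such that the corresponding linear
combination is zero-layered in every coordinate (equivalently, some subfamily
admits a combination with all coefficients in `𝓡^×` which is zero-layered
everywhere). -/
def LinDep [LinearOrder F] [Zero L] [Add L] [Add F] [Mul L] {m n : ℕ}
    (v : Fin m → Fin n → ELT F L) : Prop :=
  ∃ a : Fin m → ELT F L, (∀ i, TangibleOrBot (a i)) ∧ (∃ i, a i ≠ bot) ∧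
    ∀ j : Fin n, s (fsum fun i => a i * v i j) = 0

/-- The ELT determinant of a square ELT matrix. -/
noncomputable def det {n : ℕ} [LinearOrder F] [Add F] [Zero F] [Ring L]
    (A : Matrix (Fin n) (Fin n) (ELT F L)) : ELT F L :=
  ((Finset.univ : Finset (Equiv.Perm (Fin n))).toList.map fun σ =>
    elt 0 (((Equiv.Perm.sign σ : ℤˣ) : ℤ) : L) * (List.ofFn fun i => A i (σ i)).prod).sum

/-- The EL tropicalization of a Hahn (generalized Puiseux) series: `0 ↦ −∞`,
and a nonzero series with leading monomial `ℓ tᵃ` goes to `[ℓ](−a)`. -/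
noncomputable def ELTrop [AddCommGroup F] [LinearOrder F] [IsOrderedAddMonoid F] [Zero L] (x : HahnSeries F L) : ELT F L :=
  open scoped Classical in
  if x = 0 then bot else elt (-x.order) (x.coeff x.order)

end ELT

namespace ELT

/-- The ELT conjugate on `𝓡(ℝ,ℂ) ∪ {−∞}`. -/
def econj : ELT ℝ ℂ → ELT ℝ ℂ
  | bot => bot
  | elt a ℓ => elt a (starRingEnd ℂ ℓ)

end ELT

/-- An ELT inner product on `𝓡̄ⁿ` over `𝓡 = 𝓡(ℝ,ℂ)`. -/
structure ELTInnerProduct (n : ℕ) where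
  /-- the underlying pairing -/
  inner : (Fin n → ELT ℝ ℂ) → (Fin n → ELT ℝ ℂ) → ELT ℝ ℂ
  /-- linearity in the first argument: `⟨av + bu, w⟩ = a⟨v,w⟩ + b⟨u,w⟩` -/
  linear : ∀ (a b : ELT ℝ ℂ) (v u w : Fin n → ELT ℝ ℂ),
    inner (fun i => a * v i + b * u i) w = a * inner v w + b * inner u w
  /-- conjugate symmetry -/
  conj_symm : ∀ u v : Fin n → ELT ℝ ℂ, inner v u = ELT.econj (inner u v)
  /-- `s(⟨v,v⟩)` is a nonnegative real number -/
  layer_nonneg : ∀ v : Fin n → ELT ℝ ℂ,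
    0 ≤ (ELT.s (inner v v)).re ∧ (ELT.s (inner v v)).im = 0
  /-- for `v` with entries in `𝓡^× ∪ {−∞}`, `s(⟨v,v⟩) = 0` iff `v = (−∞,…,−∞)` -/
  definite : ∀ v : Fin n → ELT ℝ ℂ, (∀ i, ELT.TangibleOrBot (v i)) →
    (ELT.s (inner v v) = 0 ↔ v = fun _ => ELT.bot)

/-!
The tangible value `t` turns ELT sums into maxima and products into sums, so linearity gives
`t⟨u,w⟩ = max_j (t uⱼ + t⟨eⱼ,w⟩)`, and the inequality reduces to its tropical version
`2 t⟨eⱼ,eₖ⟩ ≤ t⟨eⱼ,eⱼ⟩ + t⟨eₖ,eₖ⟩` on the standard basis. If that failed, with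
`⟨eⱼ,eⱼ⟩ = [d]α`, `⟨eₖ,eₖ⟩ = [d']β` and `⟨eⱼ,eₖ⟩ = [ℓ]c`, then for `w = eⱼ + [μ]((α - β)/2) eₖ` the
two cross terms would dominate `⟨w,w⟩`, whose layer is therefore `2 Re(μ̄ℓ)`. Taking `μ = -ℓ`
(or `μ = 1` if `ℓ = 0`) makes this layer negative or zero, against nonnegativity or definiteness.
-/

namespace ELT

variable {F L : Type}

instance [LinearOrder F] [Add L] : AddZeroClass (ELT F L) where
  zero_add x := by cases x <;> rfl
  add_zero x := by cases x <;> rfl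

instance [AddZeroClass F] [MulOneClass L] : MulZeroOneClass (ELT F L) where
  one_mul
    | bot => rfl
    | elt a l => congrArg₂ elt (zero_add a) (one_mul l)
  mul_one
    | bot => rfl
    | elt a l => congrArg₂ elt (add_zero a) (mul_one l)
  zero_mul x := by cases x <;> rfl
  mul_zero x := by cases x <;> rfl

@[simp]
lemma elt_mul_elt [Add F] [Mul L] (a b : F) (l k : L) :
    elt a l * elt b k = elt (a + b) (l * k) := rfl

section Add

variable [LinearOrder F] [Add L] {a b : F} (l k : L)

lemma elt_add_elt_of_lt (h : a < b) : elt a l + elt b k = elt b k :=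
  if_pos h

lemma elt_add_elt_of_gt (h : b < a) : elt a l + elt b k = elt a l :=
  (if_neg h.not_gt).trans (if_pos h)

lemma elt_add_elt_self : elt a l + elt a k = elt a (l + k) :=
  (if_neg (lt_irrefl a)).trans (if_neg (lt_irrefl a))

lemma t_add (x y : ELT F L) : t (x + y) = t x ⊔ t y := by
  rcases x with _ | ⟨a, l⟩
  · exact (bot_sup_eq _).symm
  rcases y with _ | ⟨b, k⟩
  · exact (sup_bot_eq _).symm
  rcases lt_trichotomy a b with h | rfl | h
  · rw [elt_add_elt_of_lt _ _ h]
    exact (sup_of_le_right (WithBot.coe_le_coe.mpr h.le)).symm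
  · rw [elt_add_elt_self]
    exact (sup_idem _).symm
  · rw [elt_add_elt_of_gt _ _ h]
    exact (sup_of_le_left (WithBot.coe_le_coe.mpr h.le)).symm

end Add

lemma t_mul [Add F] [Mul L] (x y : ELT F L) : t (x * y) = t x + t y := by
  cases x <;> cases y <;> rfl

@[simp]
lemma t_zero : t (0 : ELT F L) = ⊥ := rfl

@[simp]
lemma t_bot : t (bot : ELT F L) = ⊥ := rfl

lemma one_ne_bot [Zero F] [One L] : (1 : ELT F L) ≠ bot :=
  nofun

@[simp]
lemma t_one [Zero F] [One L] : t (1 : ELT F L) = 0 := rfl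

lemma tangibleOrBot_elt [Zero L] (a : F) {l : L} (hl : l ≠ 0) : TangibleOrBot (elt a l) :=
  Or.inr hl

lemma econj_elt (a : ℝ) (l : ℂ) : econj (elt a l) = elt a (starRingEnd ℂ l) := rfl

lemma t_econj (x : ELT ℝ ℂ) : t (econj x) = t x := by
  cases x <;> rfl

end ELT

lemma Complex.exists_ne_zero_re_conj_mul_nonpos (l : ℂ) :
    ∃ μ : ℂ, μ ≠ 0 ∧ (starRingEnd ℂ μ * l).re ≤ 0 := by
  by_cases hl : l = 0
  · exact ⟨1, one_ne_zero, by simp [hl]⟩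
  · refine ⟨-l, neg_ne_zero.mpr hl, ?_⟩
    rw [map_neg, neg_mul, Complex.neg_re, ← Complex.normSq_eq_conj_mul_self, Complex.ofReal_re,
      neg_nonpos]
    exact Complex.normSq_nonneg l

namespace ELTInnerProduct

open ELT

variable {n : ℕ} (P : ELTInnerProduct n)

lemma inner_zero_left (w : Fin n → ELT ℝ ℂ) : P.inner 0 w = 0 := by
  have h := P.linear 0 0 0 0 w
  simp only [zero_mul, add_zero] at h
  exact h

lemma t_inner_comm (x y : Fin n → ELT ℝ ℂ) : t (P.inner x y) = t (P.inner y x) := by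
  rw [P.conj_symm y x, t_econj]

lemma t_inner_piecewise (u w : Fin n → ELT ℝ ℂ) (s : Finset (Fin n)) :
    t (P.inner (s.piecewise u 0) w) =
      s.sup fun j => t (u j) + t (P.inner (Pi.single j 1) w) := by
  induction s using Finset.induction_on with
  | empty => simp [inner_zero_left]
  | insert j s hj ih =>
    have hsplit : (insert j s).piecewise u 0 =
        fun i => 1 * s.piecewise u 0 i + u j * (Pi.single j 1 : Fin n → ELT ℝ ℂ) i := by
      funext i
      by_cases hij : i = j
      · subst hij; simp [hj]
      · simp [Finset.piecewise, hij]
    rw [hsplit, P.linear, t_add, t_mul, t_mul, ih, Finset.sup_insert, t_one, zero_add, sup_comm]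

lemma t_inner_eq_sup (u w : Fin n → ELT ℝ ℂ) :
    t (P.inner u w) = Finset.univ.sup fun j => t (u j) + t (P.inner (Pi.single j 1) w) := by
  simpa using P.t_inner_piecewise u w Finset.univ

lemma le_t_inner (u w : Fin n → ELT ℝ ℂ) (j : Fin n) :
    t (u j) + t (P.inner (Pi.single j 1) w) ≤ t (P.inner u w) := by
  rw [t_inner_eq_sup P u w]
  exact Finset.le_sup (f := fun j => t (u j) + t (P.inner (Pi.single j 1) w)) (Finset.mem_univ j)

lemma t_inner_eq_bot_or_exists (u w : Fin n → ELT ℝ ℂ) :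
    t (P.inner u w) = ⊥ ∨ ∃ j, t (P.inner u w) = t (u j) + t (P.inner (Pi.single j 1) w) := by
  rw [t_inner_eq_sup]
  rcases (Finset.univ : Finset (Fin n)).eq_empty_or_nonempty with h | h
  · exact Or.inl (by rw [h, Finset.sup_empty])
  · obtain ⟨j, -, hj⟩ := Finset.exists_mem_eq_sup _ h
      fun j => t (u j) + t (P.inner (Pi.single j 1) w)
    exact Or.inr ⟨j, hj⟩

lemma add_le_t_inner_self (x : Fin n → ELT ℝ ℂ) (j : Fin n) :
    t (x j) + t (x j) + t (P.inner (Pi.single j 1) (Pi.single j 1)) ≤ t (P.inner x x) :=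
  calc t (x j) + t (x j) + t (P.inner (Pi.single j 1) (Pi.single j 1))
      ≤ t (x j) + t (P.inner x (Pi.single j 1)) := by
        rw [add_assoc]
        gcongr
        exact P.le_t_inner x _ j
    _ = t (x j) + t (P.inner (Pi.single j 1) x) := by rw [t_inner_comm]
    _ ≤ t (P.inner x x) := P.le_t_inner x x j

lemma inner_self_eq_of_cross_term_dominant {x y : Fin n → ELT ℝ ℂ} {α β c t₀ : ℝ} {d d' l : ℂ}
    (μ : ℂ)
    (hx : P.inner x x = elt α d) (hxy : P.inner x y = elt c l) (hy : P.inner y y = elt β d')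
    (hα : α < t₀ + c) (hβ : t₀ + β < c) :
    P.inner (fun i => 1 * x i + elt t₀ μ * y i) (fun i => 1 * x i + elt t₀ μ * y i) =
      elt (t₀ + c) (starRingEnd ℂ μ * l + μ * starRingEnd ℂ l) := by
  set w := fun i => 1 * x i + elt t₀ μ * y i
  have hyx : P.inner y x = elt c (starRingEnd ℂ l) := by rw [P.conj_symm x y, hxy, econj_elt]
  have hwx : P.inner w x = elt (t₀ + c) (μ * starRingEnd ℂ l) := by
    rw [P.linear, hx, hyx, one_mul, elt_mul_elt, elt_add_elt_of_lt _ _ hα]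
  have hwy : P.inner w y = elt c l := by
    rw [P.linear, hxy, hy, one_mul, elt_mul_elt, elt_add_elt_of_gt _ _ hβ]
  rw [P.linear, P.conj_symm w x, P.conj_symm w y, hwx, hwy, econj_elt, econj_elt, one_mul,
    elt_mul_elt, elt_add_elt_self]
  simp

lemma tangibleOrBot_single (j : Fin n) :
    ∀ i, TangibleOrBot ((Pi.single j 1 : Fin n → ELT ℝ ℂ) i) := by
  intro i
  rcases eq_or_ne i j with rfl | hij
  · exact Or.inr (by rw [Pi.single_eq_same]; exact one_ne_zero)
  · exact Or.inl (Pi.single_eq_of_ne hij _)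

lemma exists_inner_single_self_eq_elt (j : Fin n) :
    ∃ α d, P.inner (Pi.single j 1) (Pi.single j 1) = elt α d := by
  rcases h : P.inner (Pi.single j 1) (Pi.single j 1) with _ | ⟨α, d⟩
  · have h0 := congrFun ((P.definite _ (tangibleOrBot_single j)).mp (by rw [h]; rfl)) j
    rw [Pi.single_eq_same] at h0
    exact (one_ne_bot h0).elim
  · exact ⟨α, d, rfl⟩

lemma t_inner_single_add_self_le (j k : Fin n) :
    t (P.inner (Pi.single j 1) (Pi.single k 1)) + t (P.inner (Pi.single j 1) (Pi.single k 1)) ≤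
      t (P.inner (Pi.single j 1) (Pi.single j 1)) +
        t (P.inner (Pi.single k 1) (Pi.single k 1)) := by
  rcases eq_or_ne j k with rfl | hjk
  · rfl
  obtain ⟨α, d, hα⟩ := P.exists_inner_single_self_eq_elt j
  obtain ⟨β, d', hβ⟩ := P.exists_inner_single_self_eq_elt k
  rcases hG : P.inner (Pi.single j 1) (Pi.single k 1) with _ | ⟨c, l⟩
  · simp
  rw [hα, hβ]
  show ((c + c : ℝ) : WithBot ℝ) ≤ ((α + β : ℝ) : WithBot ℝ)
  rw [WithBot.coe_le_coe]
  by_contra! hlt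
  obtain ⟨μ, hμ, hre⟩ := Complex.exists_ne_zero_re_conj_mul_nonpos l
  set w : Fin n → ELT ℝ ℂ := fun i =>
    1 * (Pi.single j 1 : Fin n → ELT ℝ ℂ) i +
      elt ((α - β) / 2) μ * (Pi.single k 1 : Fin n → ELT ℝ ℂ) i
  have hww := P.inner_self_eq_of_cross_term_dominant (t₀ := (α - β) / 2) μ hα hG hβ
    (by linarith) (by linarith)
  have hw_j : w j = 1 := by simp [w, hjk]
  have hw_tangible : ∀ i, TangibleOrBot (w i) := by
    intro i
    rcases eq_or_ne i j with rfl | hij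
    · rw [hw_j]; exact tangibleOrBot_elt 0 one_ne_zero
    rcases eq_or_ne i k with rfl | hik
    · simpa [w, hij] using tangibleOrBot_elt ((α - β) / 2) hμ
    · exact Or.inl (by simp [w, hij, hik]; rfl)
  have hs : s (P.inner w w) = 0 := by
    have hnn := (P.layer_nonneg w).1
    have hlayer : starRingEnd ℂ μ * l + μ * starRingEnd ℂ l =
        ((2 * (starRingEnd ℂ μ * l).re : ℝ) : ℂ) := by
      rw [← Complex.add_conj]; simp [mul_comm]
    rw [hww, s, hlayer, Complex.ofReal_re] at hnn
    rw [hww, s, hlayer, le_antisymm hre (by linarith)]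
    simp
  have h0 := congrFun ((P.definite w hw_tangible).mp hs) j
  rw [hw_j] at h0
  exact one_ne_bot h0

end ELTInnerProduct

/-- The ELT Cauchy–Schwarz inequality: `t(⟨u,v⟩²) ≤ t(⟨u,u⟩⋅⟨v,v⟩)`. -/
theorem stmt15 {n : ℕ} (P : ELTInnerProduct n) (u v : Fin n → ELT ℝ ℂ) :
    ELT.t (P.inner u v * P.inner u v) ≤ ELT.t (P.inner u u * P.inner v v) := by
  rw [ELT.t_mul, ELT.t_mul]
  rcases P.t_inner_eq_bot_or_exists u v with h | ⟨j, hj⟩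
  · simp [h]
  rw [P.t_inner_comm (Pi.single j 1)] at hj
  rcases P.t_inner_eq_bot_or_exists v (Pi.single j 1) with h | ⟨k, hk⟩
  · simp [hj, h]
  rw [hj, hk]
  set a := ELT.t (u j)
  set b := ELT.t (v k)
  set g := ELT.t (P.inner (Pi.single k 1) (Pi.single j 1))
  calc a + (b + g) + (a + (b + g)) = a + a + (b + b) + (g + g) := by abel
    _ ≤ a + a + (b + b) + (ELT.t (P.inner (Pi.single k 1) (Pi.single k 1)) +
          ELT.t (P.inner (Pi.single j 1) (Pi.single j 1))) :=
        add_le_add le_rfl (P.t_inner_single_add_self_le k j)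
    _ = a + a + ELT.t (P.inner (Pi.single j 1) (Pi.single j 1)) +
          (b + b + ELT.t (P.inner (Pi.single k 1) (Pi.single k 1))) := by abel
    _ ≤ ELT.t (P.inner u u) + ELT.t (P.inner v v) :=
        add_le_add (P.add_le_t_inner_self u j) (P.add_le_t_inner_self v k)
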